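/- arXiv:2603.00716 — 2 statements merged into one kernel-verified Lean document; each statement's English description precedes it below -/
import Mathlib

section
/- Let λ > 0 and let φ_1, φ_2, ... ∈ ℝ^d with ‖φ_i‖_2 ≤ 1 for all i. Define Σ_k = λI + Σ_{i=1}^k φ_i φ_iᵀ. For any D ≥ 1, Σ_{i=1}^D min(1, ‖φ_i‖²_{Σ_{i−1}^{-1}}) ≤ 2 ln(det Σ_D / det Σ_0) ≤ 2d · ln(1 + D/(λd)). -/
open Matrix BigOperators Finset

noncomputable def ellipNorm {d : ℕ} (V : Matrix (Fin d) (Fin d) ℝ) (x : Fin d → ℝ) : ℝ :=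
  Real.sqrt (x ⬝ᵥ V.mulVec x)

noncomputable def l2norm {d : ℕ} (x : Fin d → ℝ) : ℝ :=
  Real.sqrt (x ⬝ᵥ x)

noncomputable def covMat {d : ℕ} (lam : ℝ) (φ : ℕ → Fin d → ℝ) (k : ℕ) :
    Matrix (Fin d) (Fin d) ℝ :=
  lam • (1 : Matrix (Fin d) (Fin d) ℝ) + ∑ i ∈ Finset.range k, vecMulVec (φ i) (φ i)

/-!
The matrix determinant lemma gives `det Σ_{k+1} = det Σ_k * (1 + ‖φ_k‖²_{Σ_k⁻¹})`, so
`log (det Σ_D / det Σ_0)` telescopes to `∑ log (1 + ‖φ_i‖²_{Σ_i⁻¹})`, and termwise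
`min 1 w ≤ 2 log (1 + w)`. For the second bound, AM–GM on the eigenvalues gives
`det Σ_D ≤ (trace Σ_D / d) ^ d ≤ (λ + D / d) ^ d`, while `det Σ_0 = λ ^ d`.
-/

namespace Matrix

variable {n : Type*} [Fintype n] [DecidableEq n]

theorem det_add_vecMulVec {α : Type*} [CommRing α] {A : Matrix n n α} (hA : IsUnit A.det)
    (u v : n → α) : (A + vecMulVec u v).det = A.det * (1 + v ⬝ᵥ A⁻¹ *ᵥ u) := by
  rw [vecMulVec_eq Unit, det_add_replicateCol_mul_replicateRow hA, Matrix.mul_assoc,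
    ← replicateCol_mulVec]
  congr 1
  simp [det_unique]

theorem PosDef.log_det_le {A : Matrix n n ℝ} (hA : A.PosDef) [Nonempty n] :
    Real.log A.det ≤ Fintype.card n * Real.log (A.trace / Fintype.card n) := by
  have hcard : (0 : ℝ) < Fintype.card n := by exact_mod_cast Fintype.card_pos
  set μ := hA.isHermitian.eigenvalues
  have hμ : ∀ i, 0 < μ i := hA.eigenvalues_pos
  have hdet : A.det = ∏ i, μ i := by simpa using hA.isHermitian.det_eq_prod_eigenvalues
  have htr : A.trace = ∑ i, μ i := by simpa using hA.isHermitian.trace_eq_sum_eigenvalues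
  have hJensen := strictConcaveOn_log_Ioi.concaveOn.le_map_sum (t := Finset.univ)
    (w := fun _ => (Fintype.card n : ℝ)⁻¹) (p := μ) (fun _ _ => by positivity)
    (by simp [Finset.card_univ, hcard.ne']) (fun i _ => hμ i)
  simp only [smul_eq_mul, ← Finset.mul_sum] at hJensen
  rw [hdet, htr, Real.log_prod fun i _ => (hμ i).ne', div_eq_inv_mul]
  exact (inv_mul_le_iff₀ hcard).mp hJensen

end Matrix

theorem min_one_le_two_mul_log_one_add {w : ℝ} (hw : 0 ≤ w) :
    min 1 w ≤ 2 * Real.log (1 + w) :=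
  calc min 1 w ≤ 2 * (2 * w / (w + 2)) := by
        rw [mul_div_assoc', le_div_iff₀ (by linarith)]
        rcases le_total w 1 with hw1 | hw1
        · rw [min_eq_right hw1]; nlinarith
        · rw [min_eq_left hw1]; linarith
    _ ≤ 2 * Real.log (1 + w) := by gcongr; exact Real.le_log_one_add_of_nonneg hw

theorem ellipNorm_sq {d : ℕ} {V : Matrix (Fin d) (Fin d) ℝ} (hV : V.PosSemidef) (x : Fin d → ℝ) :
    ellipNorm V x ^ 2 = x ⬝ᵥ V *ᵥ x :=
  Real.sq_sqrt (by simpa using hV.dotProduct_mulVec_nonneg x)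

theorem dotProduct_self_le_one_of_l2norm_le_one {d : ℕ} {x : Fin d → ℝ} (hx : l2norm x ≤ 1) :
    x ⬝ᵥ x ≤ 1 := by
  rwa [l2norm, Real.sqrt_le_one] at hx

section covMat

variable {d : ℕ} {lam : ℝ} (φ : ℕ → Fin d → ℝ)

theorem covMat_posDef (hlam : 0 < lam) (k : ℕ) : (covMat lam φ k).PosDef :=
  (PosDef.one.smul hlam).add_posSemidef <|
    Finset.sum_induction _ _ (fun _ _ => .add) .zero fun i _ => by
      simpa using posSemidef_vecMulVec_self_star (φ i)

theorem covMat_succ (k : ℕ) :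
    covMat lam φ (k + 1) = covMat lam φ k + vecMulVec (φ k) (φ k) := by
  rw [covMat, covMat, Finset.sum_range_succ, add_assoc]

theorem det_covMat_zero : (covMat lam φ 0).det = lam ^ d := by
  simp [covMat]

theorem det_covMat_succ (hlam : 0 < lam) (k : ℕ) :
    (covMat lam φ (k + 1)).det
      = (covMat lam φ k).det * (1 + ellipNorm (covMat lam φ k)⁻¹ (φ k) ^ 2) := by
  rw [covMat_succ, det_add_vecMulVec (covMat_posDef φ hlam k).det_pos.ne'.isUnit,
    ellipNorm_sq (covMat_posDef φ hlam k).inv.posSemidef]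

theorem trace_covMat_le (hφ : ∀ i, l2norm (φ i) ≤ 1) (k : ℕ) :
    (covMat lam φ k).trace ≤ lam * d + k := by
  have hsum : ∑ i ∈ Finset.range k, φ i ⬝ᵥ φ i ≤ k := by
    simpa using Finset.sum_le_sum fun i (_ : i ∈ Finset.range k) =>
      dotProduct_self_le_one_of_l2norm_le_one (hφ i)
  simpa [covMat, trace_sum] using hsum

theorem log_det_covMat_div_eq_sum (hlam : 0 < lam) (D : ℕ) :
    Real.log ((covMat lam φ D).det / (covMat lam φ 0).det)
      = ∑ i ∈ Finset.range D, Real.log (1 + ellipNorm (covMat lam φ i)⁻¹ (φ i) ^ 2) := by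
  induction D with
  | zero => simp [(covMat_posDef φ hlam 0).det_pos.ne']
  | succ k ih =>
    rw [Finset.sum_range_succ, ← ih, det_covMat_succ φ hlam, mul_div_right_comm,
      Real.log_mul (div_pos (covMat_posDef φ hlam k).det_pos
        (covMat_posDef φ hlam 0).det_pos).ne' (by positivity)]

theorem log_det_covMat_div_le (hlam : 0 < lam) (hφ : ∀ i, l2norm (φ i) ≤ 1) (D : ℕ) :
    Real.log ((covMat lam φ D).det / (covMat lam φ 0).det)
      ≤ d * Real.log (1 + D / (lam * d)) := by
  rcases Nat.eq_zero_or_pos d with rfl | hd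
  · simp
  have : Nonempty (Fin d) := ⟨⟨0, hd⟩⟩
  have hdet := (covMat_posDef φ hlam D).log_det_le
  rw [Fintype.card_fin] at hdet
  calc Real.log ((covMat lam φ D).det / (covMat lam φ 0).det)
      ≤ d * Real.log ((covMat lam φ D).trace / d) - d * Real.log lam := by
        rw [Real.log_div (covMat_posDef φ hlam D).det_pos.ne'
          (covMat_posDef φ hlam 0).det_pos.ne', det_covMat_zero, Real.log_pow]
        linarith
    _ ≤ d * Real.log ((lam * d + D) / d) - d * Real.log lam := by
        gcongr
        · exact div_pos (covMat_posDef φ hlam D).trace_pos (by positivity)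
        · exact trace_covMat_le φ hφ D
    _ = d * Real.log (1 + D / (lam * d)) := by
        rw [← mul_sub, ← Real.log_div (by positivity) hlam.ne']
        congr 2
        field_simp

end covMat

theorem stmt_5_general {d : ℕ} (lam : ℝ) (hlam : 0 < lam)
    (φ : ℕ → Fin d → ℝ) (hφ : ∀ i, l2norm (φ i) ≤ 1)
    (D : ℕ) :
    (∑ i ∈ Finset.range D, min 1 ((ellipNorm (covMat lam φ i)⁻¹ (φ i)) ^ 2)
        ≤ 2 * Real.log ((covMat lam φ D).det / (covMat lam φ 0).det)) ∧
    2 * Real.log ((covMat lam φ D).det / (covMat lam φ 0).det)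
        ≤ 2 * d * Real.log (1 + D / (lam * d)) := by
  constructor
  · rw [log_det_covMat_div_eq_sum φ hlam, Finset.mul_sum]
    exact Finset.sum_le_sum fun i _ => min_one_le_two_mul_log_one_add (sq_nonneg _)
  · rw [mul_assoc]
    exact mul_le_mul_of_nonneg_left (log_det_covMat_div_le φ hlam hφ D) zero_le_two

theorem stmt_5 {d : ℕ} (lam : ℝ) (hlam : 0 < lam)
    (φ : ℕ → Fin d → ℝ) (hφ : ∀ i, l2norm (φ i) ≤ 1)
    (D : ℕ) (hD : 1 ≤ D) :
    (∑ i ∈ Finset.range D, min 1 ((ellipNorm (covMat lam φ i)⁻¹ (φ i)) ^ 2)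
        ≤ 2 * Real.log ((covMat lam φ D).det / (covMat lam φ 0).det)) ∧
    2 * Real.log ((covMat lam φ D).det / (covMat lam φ 0).det)
        ≤ 2 * d * Real.log (1 + D / (lam * d)) :=
  stmt_5_general lam hlam φ hφ D
end

section
/- Let Σ = λI + Σ_{i=1}^k φ_i φ_iᵀ with λ > 0 and ‖φ_i‖_2 ≤ 1 for all i. Then det(Σ)^{1/2} · det(λI)^{−1/2} ≤ (1 + k/(λd))^{d/2}, i.e., (1/2)·ln(det Σ / det(λI)) ≤ (d/2)·ln(1 + k/(λd)). -/
/-!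
The matrix `Σ = λI + ∑ φᵢφᵢᵀ` is positive definite, so by AM–GM on its eigenvalues
`det Σ ≤ (tr Σ / d)^d`, and `tr Σ = λd + ∑ ‖φᵢ‖² ≤ λd + k`. Dividing by `det (λI) = λ^d` gives
`det Σ / det (λI) ≤ (1 + k/(λd))^d`, of which both inequalities are monotone transforms.
-/

open Matrix BigOperators Finset Real

theorem Real.prod_le_sum_div_card_pow {ι : Type*} [Fintype ι] (z : ι → ℝ) (hz : ∀ i, 0 ≤ z i) :
    ∏ i, z i ≤ ((∑ i, z i) / Fintype.card ι) ^ Fintype.card ι := by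
  cases isEmpty_or_nonempty ι
  · simp
  have hcard : Fintype.card ι ≠ 0 := Fintype.card_ne_zero
  have hamgm := Real.geom_mean_le_arith_mean univ (fun _ => 1) z (fun _ _ => zero_le_one)
    (by simp [Nat.pos_of_ne_zero hcard]) (fun i _ => hz i)
  simp only [rpow_one, sum_const, card_univ, nsmul_eq_mul, mul_one, one_mul] at hamgm
  rw [← rpow_inv_natCast_pow (prod_nonneg fun i _ => hz i) hcard]
  exact pow_le_pow_left₀ (rpow_nonneg (prod_nonneg fun i _ => hz i) _) hamgm _

namespace Matrix

variable {n ι : Type*} [Fintype n] [DecidableEq n] [Fintype ι]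

theorem PosSemidef.det_le_trace_div_card_pow {A : Matrix n n ℝ} (hA : A.PosSemidef) :
    A.det ≤ (A.trace / Fintype.card n) ^ Fintype.card n := by
  rw [hA.isHermitian.det_eq_prod_eigenvalues, hA.isHermitian.trace_eq_sum_eigenvalues]
  simpa using Real.prod_le_sum_div_card_pow _ hA.eigenvalues_nonneg

theorem posDef_smul_one_add_sum_vecMulVec {lam : ℝ} (hlam : 0 < lam) (φ : ι → n → ℝ) :
    (lam • (1 : Matrix n n ℝ) + ∑ i, vecMulVec (φ i) (φ i)).PosDef :=
  (PosDef.one.smul hlam).add_posSemidef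
    (posSemidef_sum _ fun i _ => by simpa using posSemidef_vecMulVec_self_star (φ i))

theorem trace_smul_one_add_sum_vecMulVec (lam : ℝ) (φ : ι → n → ℝ) :
    (lam • (1 : Matrix n n ℝ) + ∑ i, vecMulVec (φ i) (φ i)).trace
      = lam * Fintype.card n + ∑ i, φ i ⬝ᵥ φ i := by
  simp [trace_add, trace_smul, trace_sum, trace_vecMulVec]

theorem det_smul_one_add_sum_vecMulVec_le {lam : ℝ} (hlam : 0 < lam) (φ : ι → n → ℝ)
    (hφ : ∀ i, φ i ⬝ᵥ φ i ≤ 1) :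
    (lam • (1 : Matrix n n ℝ) + ∑ i, vecMulVec (φ i) (φ i)).det
      ≤ (lam + Fintype.card ι / Fintype.card n) ^ Fintype.card n := by
  have hA := (posDef_smul_one_add_sum_vecMulVec hlam φ).posSemidef
  refine hA.det_le_trace_div_card_pow.trans
    (pow_le_pow_left₀ (div_nonneg hA.trace_nonneg (Nat.cast_nonneg _)) ?_ _)
  have hsum : ∑ i, φ i ⬝ᵥ φ i ≤ Fintype.card ι := by
    simpa using sum_le_sum fun i (_ : i ∈ univ) => hφ i
  rw [trace_smul_one_add_sum_vecMulVec, add_div]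
  gcongr
  exact div_le_of_le_mul₀ (Nat.cast_nonneg _) hlam.le le_rfl

end Matrix

theorem Real.rpow_half_mul_rpow_neg_half_le {D M B : ℝ} {d : ℕ} (hD : 0 ≤ D) (hM : 0 < M)
    (hB : 0 ≤ B) (h : D / M ≤ B ^ d) :
    D ^ ((1 : ℝ) / 2) * M ^ (-(1 : ℝ) / 2) ≤ B ^ ((d : ℝ) / 2) :=
  calc D ^ ((1 : ℝ) / 2) * M ^ (-(1 : ℝ) / 2) = (D / M) ^ ((1 : ℝ) / 2) := by
        rw [neg_div, rpow_neg hM.le, div_rpow hD hM.le, ← div_eq_mul_inv]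
    _ ≤ (B ^ d) ^ ((1 : ℝ) / 2) := rpow_le_rpow (div_nonneg hD hM.le) h (by norm_num)
    _ = B ^ ((d : ℝ) / 2) := by rw [← rpow_natCast, ← rpow_mul hB]; ring_nf

theorem Real.half_log_div_le {D M B : ℝ} {d : ℕ} (hD : 0 < D) (hM : 0 < M) (h : D / M ≤ B ^ d) :
    1 / 2 * log (D / M) ≤ d / 2 * log B := by
  have := log_le_log (div_pos hD hM) h
  rw [log_pow] at this
  linarith

theorem stmt_11_general {d k : ℕ} (lam : ℝ) (hlam : 0 < lam)
    (φ : Fin k → Fin d → ℝ) (hφ : ∀ i, l2norm (φ i) ≤ 1)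
    (Sig : Matrix (Fin d) (Fin d) ℝ)
    (hSig : Sig = lam • (1 : Matrix (Fin d) (Fin d) ℝ) + ∑ i : Fin k, vecMulVec (φ i) (φ i)) :
    Sig.det ^ ((1 : ℝ) / 2) * (lam • (1 : Matrix (Fin d) (Fin d) ℝ)).det ^ (-(1 : ℝ) / 2)
      ≤ (1 + k / (lam * d)) ^ ((d : ℝ) / 2) ∧
    (1 / 2) * Real.log (Sig.det / (lam • (1 : Matrix (Fin d) (Fin d) ℝ)).det)
      ≤ (d / 2) * Real.log (1 + k / (lam * d)) := by
  have hdet_pos : 0 < Sig.det := hSig ▸ (posDef_smul_one_add_sum_vecMulVec hlam φ).det_pos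
  have hdetI : (lam • (1 : Matrix (Fin d) (Fin d) ℝ)).det = lam ^ d := by simp
  have hratio : Sig.det / lam ^ d ≤ (1 + k / (lam * d)) ^ d := by
    have hdet := det_smul_one_add_sum_vecMulVec_le hlam φ fun i => sqrt_le_one.mp (hφ i)
    rw [← hSig, Fintype.card_fin, Fintype.card_fin] at hdet
    have hscale : (1 + k / (lam * d)) * lam = lam + k / d := by
      rw [add_mul, one_mul, div_mul_eq_mul_div, mul_comm lam, mul_div_mul_right _ _ hlam.ne']
    rwa [div_le_iff₀ (pow_pos hlam d), ← mul_pow, hscale]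
  rw [hdetI]
  exact ⟨rpow_half_mul_rpow_neg_half_le hdet_pos.le (pow_pos hlam d) (by positivity) hratio,
    half_log_div_le hdet_pos (pow_pos hlam d) hratio⟩

theorem stmt_11 {d k : ℕ} (hd : 1 ≤ d) (lam : ℝ) (hlam : 0 < lam)
    (φ : Fin k → Fin d → ℝ) (hφ : ∀ i, l2norm (φ i) ≤ 1)
    (Sig : Matrix (Fin d) (Fin d) ℝ)
    (hSig : Sig = lam • (1 : Matrix (Fin d) (Fin d) ℝ) + ∑ i : Fin k, vecMulVec (φ i) (φ i)) :
    Sig.det ^ ((1 : ℝ) / 2) * (lam • (1 : Matrix (Fin d) (Fin d) ℝ)).det ^ (-(1 : ℝ) / 2)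
      ≤ (1 + k / (lam * d)) ^ ((d : ℝ) / 2) ∧
    (1 / 2) * Real.log (Sig.det / (lam • (1 : Matrix (Fin d) (Fin d) ℝ)).det)
      ≤ (d / 2) * Real.log (1 + k / (lam * d)) :=
  stmt_11_general lam hlam φ hφ Sig hSig
end
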